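/- Let X, Y be metrizable spaces and 1 ≤ ξ < ω₁. A function f : X → Y is a Δ⁰_ξ-function if and only if there is a Σ⁰_ξ-partition of X such that f is locally a Δ⁰_ξ-function on it, i.e. there exist an at most countable family ⟨C_n⟩ of nonempty pairwise disjoint Σ⁰_ξ subsets of X with union X and Δ⁰_ξ-functions f_n : X → Y with f agreeing with f_n on C_n for each n. -/
import Mathlib


open Set Filter Topology TopologicalSpace Ordinal

/-- The Borel pointclasses `Σ⁰_ξ` of a metrizable space, for ordinals `ξ ≥ 1`:
`Σ⁰₁` is the collection of open sets and, for `ξ > 1`, `Σ⁰_ξ` consists of the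
countable unions of sets each of which belongs to `Π⁰_ν` (i.e. has its
complement in `Σ⁰_ν`) for some `1 ≤ ν < ξ`. -/
noncomputable def SigmaZero (X : Type*) [TopologicalSpace X] : Ordinal.{0} → Set (Set X) :=
  WellFounded.fix wellFounded_lt fun ξ ih =>
    if ξ = 1 then {s | IsOpen s}
    else {s | ∃ f : ℕ → Set X,
      (∀ n, ∃ ν, ∃ hν : ν < ξ, 1 ≤ ν ∧ (f n)ᶜ ∈ ih ν hν) ∧ s = ⋃ n, f n}

/-- `Π⁰_ξ`: the complements of `Σ⁰_ξ` sets (with the convention that `Π⁰₀` is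
the collection of clopen sets). -/
def PiZero (X : Type*) [TopologicalSpace X] (ξ : Ordinal.{0}) : Set (Set X) :=
  if ξ = 0 then {s | IsClopen s} else {s | sᶜ ∈ SigmaZero X ξ}

/-- `Δ⁰_ξ = Σ⁰_ξ ∩ Π⁰_ξ`. -/
def DeltaZero (X : Type*) [TopologicalSpace X] (ξ : Ordinal.{0}) : Set (Set X) :=
  SigmaZero X ξ ∩ PiZero X ξ

/-- `f` is a `Δ⁰_ξ`-function if preimages of `Σ⁰_ξ` sets are `Σ⁰_ξ`. -/
def IsDeltaFun {X Y : Type*} [TopologicalSpace X] [TopologicalSpace Y]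
    (ξ : Ordinal.{0}) (f : X → Y) : Prop :=
  ∀ A ∈ SigmaZero Y ξ, f ⁻¹' A ∈ SigmaZero X ξ

/-- Baire class `ξ` functions (for `ξ ≥ 1`): `f` is of Baire class `1` if
preimages of open sets are `Σ⁰₂`, and for `ξ > 1` it is of Baire class `ξ` if it
is the pointwise limit of a sequence of functions each of Baire class `ν` for
some `1 ≤ ν < ξ`. -/
noncomputable def BaireClass {X Y : Type*} [TopologicalSpace X] [TopologicalSpace Y] :
    Ordinal.{0} → (X → Y) → Prop :=
  WellFounded.fix wellFounded_lt fun ξ ih f =>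
    if ξ = 1 then ∀ U : Set Y, IsOpen U → f ⁻¹' U ∈ SigmaZero X 2
    else ∃ g : ℕ → X → Y,
      (∀ n, ∃ ν, ∃ hν : ν < ξ, 1 ≤ ν ∧ ih ν hν (g n)) ∧
      ∀ x, Tendsto (fun n => g n x) atTop (𝓝 (f x))

/-- A `Γ`-partition of the whole space: an at most countable family of nonempty
pairwise disjoint sets of `Γ` whose union is the space. -/
def IsPartitionIn {X : Type*} (Γ : Set (Set X)) (P : Set (Set X)) : Prop :=
  P.Countable ∧ (∀ C ∈ P, C.Nonempty) ∧ (∀ C ∈ P, C ∈ Γ) ∧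
    P.PairwiseDisjoint id ∧ ⋃₀ P = Set.univ

theorem sigmaZero_eq (X : Type*) [TopologicalSpace X] (ξ : Ordinal.{0}) :
    SigmaZero X ξ = if ξ = 1 then {s | IsOpen s}
    else {s | ∃ f : ℕ → Set X,
      (∀ n, ∃ ν, ∃ _ : ν < ξ, 1 ≤ ν ∧ (f n)ᶜ ∈ SigmaZero X ν) ∧ s = ⋃ n, f n} := by
  rw [SigmaZero, WellFounded.fix_eq]

theorem sigmaZero_one (X : Type*) [TopologicalSpace X] :
    SigmaZero X 1 = {s | IsOpen s} := by
  rw [sigmaZero_eq, if_pos rfl]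

theorem mem_sigmaZero_gt_one {X : Type*} [TopologicalSpace X] {ξ : Ordinal.{0}} (hξ : 1 < ξ)
    {s : Set X} : s ∈ SigmaZero X ξ ↔ ∃ f : ℕ → Set X,
      (∀ n, ∃ ν, ν < ξ ∧ 1 ≤ ν ∧ (f n)ᶜ ∈ SigmaZero X ν) ∧ s = ⋃ n, f n := by
  rw [sigmaZero_eq, if_neg hξ.ne']
  simp only [mem_setOf_eq, exists_prop]

theorem IsOpen.mem_sigmaZero {X : Type*} [TopologicalSpace X] [MetrizableSpace X]
    {ξ : Ordinal.{0}} (hξ : 1 ≤ ξ) {s : Set X} (hs : IsOpen s) : s ∈ SigmaZero X ξ := by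
  rcases eq_or_lt_of_le hξ with h1 | h1
  · rw [← h1, sigmaZero_one]; exact hs
  · letI : MetricSpace X := TopologicalSpace.metrizableSpaceMetric X
    obtain ⟨g, hgo, hgi⟩ := (isGδ_iff_eq_iInter_nat.mp hs.isClosed_compl.isGδ)
    rw [mem_sigmaZero_gt_one h1]
    refine ⟨fun n => (g n)ᶜ, fun n => ⟨1, h1, le_refl 1, ?_⟩, ?_⟩
    · rw [compl_compl, sigmaZero_one]; exact hgo n
    · rw [← compl_iInter, ← hgi, compl_compl]

theorem sigmaZero_mono {X : Type*} [TopologicalSpace X] [MetrizableSpace X]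
    {ν ξ : Ordinal.{0}} (h1 : 1 ≤ ν) (h : ν ≤ ξ) : SigmaZero X ν ⊆ SigmaZero X ξ := by
  rcases eq_or_lt_of_le h with rfl | hlt
  · exact subset_rfl
  rcases eq_or_lt_of_le h1 with h1 | h1
  · intro s hs
    rw [← h1, sigmaZero_one] at hs
    exact hs.mem_sigmaZero (h1 ▸ h)
  · intro s hs
    rw [mem_sigmaZero_gt_one h1] at hs
    obtain ⟨g, hg, rfl⟩ := hs
    rw [mem_sigmaZero_gt_one (h1.trans hlt)]
    exact ⟨g, fun n => by obtain ⟨μ, hμ, hμ1, hm⟩ := hg n; exact ⟨μ, hμ.trans hlt, hμ1, hm⟩, rfl⟩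

theorem sigmaZero_iUnion {X : Type*} [TopologicalSpace X]
    {ξ : Ordinal.{0}} (hξ : 1 ≤ ξ) {s : ℕ → Set X} (hs : ∀ n, s n ∈ SigmaZero X ξ) :
    (⋃ n, s n) ∈ SigmaZero X ξ := by
  rcases eq_or_lt_of_le hξ with rfl | h1
  · rw [sigmaZero_one] at *
    exact isOpen_iUnion fun n => hs n
  · have := fun n => (mem_sigmaZero_gt_one h1).mp (hs n)
    choose g hg hgu using this
    rw [mem_sigmaZero_gt_one h1]
    refine ⟨fun k => g k.unpair.1 k.unpair.2, fun k => hg _ _, ?_⟩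
    rw [Set.iUnion_unpair fun i j => g i j]
    exact iUnion_congr hgu

theorem sigmaZero_union {X : Type*} [TopologicalSpace X]
    {ξ : Ordinal.{0}} (hξ : 1 ≤ ξ) {s t : Set X}
    (hs : s ∈ SigmaZero X ξ) (ht : t ∈ SigmaZero X ξ) : s ∪ t ∈ SigmaZero X ξ := by
  have : s ∪ t = ⋃ n : ℕ, (if n = 0 then s else t) := by
    ext x; simp [mem_iUnion]
    constructor
    · rintro (h | h)
      · exact ⟨0, by simp [h]⟩
      · exact ⟨1, by simp [h]⟩
    · rintro ⟨n, hn⟩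
      split at hn <;> tauto
  rw [this]
  exact sigmaZero_iUnion hξ fun n => by split <;> assumption

theorem sigmaZero_inter {X : Type*} [TopologicalSpace X] [MetrizableSpace X]
    {ξ : Ordinal.{0}} (hξ : 1 ≤ ξ) {s t : Set X}
    (hs : s ∈ SigmaZero X ξ) (ht : t ∈ SigmaZero X ξ) : s ∩ t ∈ SigmaZero X ξ := by
  rcases eq_or_lt_of_le hξ with rfl | h1
  · rw [sigmaZero_one] at hs ht ⊢
    exact hs.inter ht
  · rw [mem_sigmaZero_gt_one h1] at hs ht ⊢
    obtain ⟨g, hg, rfl⟩ := hs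
    obtain ⟨g', hg', rfl⟩ := ht
    refine ⟨fun k => g k.unpair.1 ∩ g' k.unpair.2, fun k => ?_, ?_⟩
    · obtain ⟨ν, hν, hν1, hm⟩ := hg k.unpair.1
      obtain ⟨ν', hν', hν1', hm'⟩ := hg' k.unpair.2
      refine ⟨max ν ν', max_lt hν hν', le_max_of_le_left hν1, ?_⟩
      rw [Set.compl_inter]
      exact sigmaZero_union (le_max_of_le_left hν1)
        (sigmaZero_mono hν1 (le_max_left _ _) hm)
        (sigmaZero_mono hν1' (le_max_right _ _) hm')
    · ext x
      simp only [mem_inter_iff, mem_iUnion]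
      constructor
      · rintro ⟨⟨n, hn⟩, ⟨m, hm⟩⟩
        exact ⟨Nat.pair n m, by rw [Nat.unpair_pair]; exact ⟨hn, hm⟩⟩
      · rintro ⟨k, hk1, hk2⟩
        exact ⟨⟨_, hk1⟩, ⟨_, hk2⟩⟩

theorem sigmaZero_iUnion' {X : Type*} [TopologicalSpace X] [MetrizableSpace X]
    {ι : Type*} [Countable ι] {ξ : Ordinal.{0}} (hξ : 1 ≤ ξ) {s : ι → Set X}
    (hs : ∀ i, s i ∈ SigmaZero X ξ) : (⋃ i, s i) ∈ SigmaZero X ξ := by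
  cases isEmpty_or_nonempty ι with
  | inl h =>
    rw [iUnion_of_empty]
    exact isOpen_empty.mem_sigmaZero hξ
  | inr h =>
    obtain ⟨e, he⟩ := exists_surjective_nat ι
    rw [← he.iUnion_comp s]
    exact sigmaZero_iUnion hξ fun n => hs (e n)


/-- Let `X`, `Y` be metrizable spaces and `1 ≤ ξ < ω₁`.  A function `f : X → Y`
is a `Δ⁰_ξ`-function iff there is a `Σ⁰_ξ`-partition of `X` on which `f` is
locally a `Δ⁰_ξ`-function, i.e. on each piece `f` agrees with some
`Δ⁰_ξ`-function. -/
theorem deltaFun_iff_locally_deltaFun_on_partition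
    {X Y : Type*} [TopologicalSpace X] [TopologicalSpace Y]
    [TopologicalSpace.MetrizableSpace X] [TopologicalSpace.MetrizableSpace Y]
    (ξ : Ordinal.{0}) (hξ1 : 1 ≤ ξ) (hξ : ξ < ω₁) (f : X → Y) :
    IsDeltaFun ξ f ↔
      ∃ P : Set (Set X), IsPartitionIn (SigmaZero X ξ) P ∧
        ∀ C ∈ P, ∃ g : X → Y, IsDeltaFun ξ g ∧ Set.EqOn f g C := by
  constructor
  · intro hf
    cases isEmpty_or_nonempty X with
    | inl h =>
      refine ⟨∅, ⟨countable_empty, by simp, by simp, by simp, ?_⟩, by simp⟩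
      simp [Set.univ_eq_empty_iff.mpr h]
    | inr h =>
      refine ⟨{Set.univ}, ⟨countable_singleton _, ?_, ?_, pairwiseDisjoint_singleton _ _, ?_⟩, ?_⟩
      · rintro C rfl; exact univ_nonempty
      · rintro C rfl; exact isOpen_univ.mem_sigmaZero hξ1
      · simp
      · rintro C rfl; exact ⟨f, hf, fun x _ => rfl⟩
  · rintro ⟨P, ⟨hPc, hPne, hPΓ, hPd, hPu⟩, hloc⟩
    intro A hA
    choose g hg hgeq using fun (C : P) => hloc C C.2
    haveI : Countable P := hPc.to_subtype
    have key : f ⁻¹' A = ⋃ C : P, ((C : Set X) ∩ g C ⁻¹' A) := by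
      ext x
      simp only [mem_preimage, mem_iUnion, mem_inter_iff]
      constructor
      · intro hx
        have : x ∈ ⋃₀ P := hPu ▸ mem_univ x
        obtain ⟨C, hC, hxC⟩ := this
        exact ⟨⟨C, hC⟩, hxC, by rwa [← hgeq ⟨C, hC⟩ hxC]⟩
      · rintro ⟨C, hxC, hxA⟩
        rwa [hgeq C hxC]
    rw [key]
    exact sigmaZero_iUnion' hξ1 fun C =>
      sigmaZero_inter hξ1 (hPΓ C C.2) (hg C A hA)
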